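/- Let (a_t) be a sequence of positive reals satisfying a_{t+1} = (1 − b_t/t)·a_t + c_t for t ≥ 1, where b_t → b > 0 and c_t → c. Then a_t/t → c/(1+b) as t → ∞. -/

import Mathlib

open Filter

/-- Chung–Lu Lemma 3.1: if `a` is a sequence of positive reals with
`a (t+1) = (1 - b t / t) * a t + c t` for `t ≥ 1`, where `b t → b > 0` and `c t → c`,
then `a t / t → c / (1 + b)`. -/
theorem chung_lu_recurrence (a b c : ℕ → ℝ) (B C : ℝ)
    (hapos : ∀ t, 0 < a t)
    (hrec : ∀ t, 1 ≤ t → a (t + 1) = (1 - b t / (t : ℝ)) * a t + c t)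
    (hb : Tendsto b atTop (nhds B)) (hB : 0 < B)
    (hc : Tendsto c atTop (nhds C)) :
    Tendsto (fun t => a t / (t : ℝ)) atTop (nhds (C / (1 + B))) := by
  set L := C / (1 + B) with hL
  have h1B : (0:ℝ) < 1 + B := by linarith
  have hLC : L * (1 + B) = C := div_mul_cancel₀ _ (ne_of_gt h1B)
  set d : ℕ → ℝ := fun t => c t - L * (1 + b t) with hd
  set e : ℕ → ℝ := fun t => a t - L * t with he
  have herec : ∀ t : ℕ, 1 ≤ t → e (t+1) = (1 - b t / t) * e t + d t := by
    intro t ht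
    have ht0 : (t:ℝ) ≠ 0 := Nat.cast_ne_zero.2 (by omega)
    simp only [he, hd, hrec t ht]
    push_cast
    field_simp
    ring
  have hd0 : Tendsto d atTop (nhds 0) := by
    have h := hc.sub ((tendsto_const_nhds (x := L)).mul
      ((tendsto_const_nhds (x := (1:ℝ))).add hb))
    have : C - L * (1 + B) = 0 := by rw [hLC]; ring
    simpa [hd, this] using h
  -- setup: parameter β
  set β := min (B/2) 1 with hβ
  have hβpos : 0 < β := lt_min (by linarith) one_pos
  have hβ1 : β ≤ 1 := min_le_right _ _
  have hβB : β < B := lt_of_le_of_lt (min_le_left _ _) (by linarith)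
  -- key: e t / t → 0
  have key : Tendsto (fun t : ℕ => e t / t) atTop (nhds 0) := by
    rw [NormedAddCommGroup.tendsto_nhds_zero]
    intro ε hε
    set ε' := ε/2 with hε'
    have hε'pos : 0 < ε' := by positivity
    -- eventual hypotheses
    have h1 : ∀ᶠ t : ℕ in atTop, β ≤ b t := hb.eventually (eventually_ge_nhds hβB)
    have h2 : ∀ᶠ t : ℕ in atTop, b t ≤ B + 1 :=
      hb.eventually (eventually_le_nhds (by linarith))
    have h3 : ∀ᶠ t : ℕ in atTop, (B + 1 : ℝ) ≤ t :=
      tendsto_natCast_atTop_atTop.eventually_ge_atTop _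
    have h4 : ∀ᶠ t : ℕ in atTop, |d t| ≤ ε' * β := by
      have := NormedAddCommGroup.tendsto_nhds_zero.1 hd0 (ε' * β) (by positivity)
      filter_upwards [this] with t ht
      exact le_of_lt (by simpa [Real.norm_eq_abs] using ht)
    have h5 : ∀ᶠ t : ℕ in atTop, 1 ≤ t := eventually_ge_atTop 1
    obtain ⟨T, hT⟩ := eventually_atTop.1 (((h1.and h2).and (h3.and h4)).and h5)
    -- induction bound
    have hind : ∀ t : ℕ, T ≤ t → |e t| ≤ |e T| + ε' * t := by
      intro t ht
      induction t, ht using Nat.le_induction with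
      | base =>
        have : (0:ℝ) ≤ ε' * T := by positivity
        linarith
      | succ t ht ih =>
        obtain ⟨⟨⟨hb1, hb2⟩, hb3, hb4⟩, hb5⟩ := hT t ht
        have htpos : (0:ℝ) < t := by exact_mod_cast hb5
        have hfrac0 : 0 ≤ 1 - b t / t := by
          rw [sub_nonneg, div_le_one htpos]
          linarith
        have hfrac1 : 1 - b t / t ≤ 1 - β / t := by
          have h : β / (t:ℝ) ≤ b t / t := by gcongr
          linarith
        have hfracβ : 0 ≤ 1 - β / (t:ℝ) := le_trans hfrac0 hfrac1
        have habs : |e (t+1)| ≤ (1 - b t / t) * |e t| + |d t| := by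
          rw [herec t hb5]
          calc |(1 - b t / t) * e t + d t| ≤ |(1 - b t / t) * e t| + |d t| :=
                abs_add_le _ _
            _ = (1 - b t / t) * |e t| + |d t| := by
                rw [abs_mul, abs_of_nonneg hfrac0]
        have hmul : (1 - b t / t) * |e t| ≤ (1 - β / t) * (|e T| + ε' * t) :=
          mul_le_mul hfrac1 ih (abs_nonneg _) hfracβ
        have hcancel : β / (t:ℝ) * (ε' * t) = ε' * β := by
          field_simp
        have hnn : 0 ≤ β / (t:ℝ) * |e T| := by positivity
        have hexp : (1 - β / t) * (|e T| + ε' * t) + ε' * β ≤ |e T| + ε' * (t+1) := by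
          have : (1 - β / (t:ℝ)) * (|e T| + ε' * t)
              = |e T| + ε' * t - β / t * |e T| - β / t * (ε' * t) := by ring
          rw [this, hcancel]
          push_cast
          nlinarith [hε'pos.le]
        push_cast
        linarith [hb4]
    -- conclude from the induction bound
    have h6 : ∀ᶠ t : ℕ in atTop, (|e T| / ε' + 1 : ℝ) ≤ t :=
      tendsto_natCast_atTop_atTop.eventually_ge_atTop _
    filter_upwards [h6, eventually_ge_atTop T, eventually_ge_atTop 1] with t ht6 htT ht1
    have htpos : (0:ℝ) < t := by exact_mod_cast ht1
    have hbd := hind t htT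
    have hkey : ε' * (|e T| / ε' + 1) = |e T| + ε' := by
      field_simp
    have hlt : |e T| < ε' * t := by nlinarith [hε'pos]
    have : ‖e t / (t:ℝ)‖ = |e t| / t := by
      rw [Real.norm_eq_abs, abs_div, Nat.abs_cast]
    rw [this, div_lt_iff₀ htpos]
    have : ε * t = ε' * t + ε' * t := by rw [hε']; ring
    nlinarith
  -- conclude
  have heq : ∀ᶠ t : ℕ in atTop, a t / (t:ℝ) = e t / t + L := by
    filter_upwards [eventually_ge_atTop 1] with t ht
    have ht0 : (t:ℝ) ≠ 0 := Nat.cast_ne_zero.2 (by omega)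
    simp only [he]
    field_simp
    ring
  have := key.add (tendsto_const_nhds (x := L))
  rw [zero_add] at this
  exact Tendsto.congr' (heq.mono fun t h => h.symm) this
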